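/- arXiv:1501.06373 — 2 statements merged into one kernel-verified Lean document; each statement's English description precedes it below -/
import Mathlib

section
/- Let (M, τ) be a von Neumann algebra with a faithful normal tracial state, and let a, b ∈ M be free Haar unitaries. Then the family { a^k b^{-k} : k ∈ ℕ, k ≥ 1 } is a free family of Haar unitaries in (M, τ). -/
open scoped ComplexInnerProductSpace

namespace FreeProductPaper

variable {H : Type*} [NormedAddCommGroup H] [InnerProductSpace ℂ H] [CompleteSpace H]

/-- A state on `B(H)`: a unital positive linear functional. -/
def IsStateOn (φ : (H →L[ℂ] H) →ₗ[ℂ] ℂ) : Prop :=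
  φ 1 = 1 ∧ ∀ x : H →L[ℂ] H, 0 ≤ (φ (star x * x)).re ∧ (φ (star x * x)).im = 0

/-- An `A`-central state on `B(H)`. -/
def IsCentralState (A : VonNeumannAlgebra H) (φ : (H →L[ℂ] H) →ₗ[ℂ] ℂ) : Prop :=
  IsStateOn φ ∧ ∀ a ∈ A, ∀ x : H →L[ℂ] H, φ (a * x) = φ (x * a)

/-- A von Neumann algebra is amenable iff it admits a central state on `B(H)`. -/
def IsAmenable (A : VonNeumannAlgebra H) : Prop :=
  ∃ φ : (H →L[ℂ] H) →ₗ[ℂ] ℂ, IsCentralState A φ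

def IsProjection (p : H →L[ℂ] H) : Prop := IsSelfAdjoint p ∧ p * p = p

/-- A (sub)set of `B(H)` is diffuse if it has no nonzero minimal projections, i.e. every
nonzero projection in it dominates a strictly smaller nonzero projection in it. -/
def IsDiffuseSet (S : Set (H →L[ℂ] H)) : Prop :=
  ∀ p ∈ S, IsProjection p → p ≠ 0 →
    ∃ q ∈ S, IsProjection q ∧ q * p = q ∧ q ≠ 0 ∧ q ≠ p

/-- `ξ` is a unit trace vector for `M`, inducing the faithful (normal, since it is a vector
state) tracial state `x ↦ ⟪ξ, x ξ⟫`. -/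
structure IsTraceVector (M : VonNeumannAlgebra H) (ξ : H) : Prop where
  norm_one : ‖ξ‖ = 1
  tracial : ∀ x ∈ M, ∀ y ∈ M, ⟪ξ, (x * y) ξ⟫ = ⟪ξ, (y * x) ξ⟫
  separating : ∀ x ∈ M, x ξ = 0 → x = 0

/-- A family of subsets of `B(H)` is free with respect to `τ`:
alternating products of centered elements are centered. -/
def IsFreeFamily {ι : Type*} (τ : (H →L[ℂ] H) → ℂ) (S : ι → Set (H →L[ℂ] H)) : Prop :=
  ∀ (n : ℕ), 0 < n → ∀ (x : Fin n → (H →L[ℂ] H)) (g : Fin n → ι),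
    (∀ j, x j ∈ S (g j)) → (∀ j, τ (x j) = 0) →
    (∀ (j : ℕ) (h : j + 1 < n), g ⟨j, by omega⟩ ≠ g ⟨j + 1, h⟩) →
    τ ((List.ofFn x).prod) = 0

/-- A Haar unitary with respect to `τ`: a unitary all of whose nonzero powers are centered. -/
def IsHaarUnitary (τ : (H →L[ℂ] H) → ℂ) (u : H →L[ℂ] H) : Prop :=
  u ∈ unitary (H →L[ℂ] H) ∧
    ∀ n : ℕ, 0 < n → τ (u ^ n) = 0 ∧ τ ((star u) ^ n) = 0

/-!
Write `u_k = a ^ k * b ^ (-k)`. A centred element of the *-algebra generated by a unitary `u`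
with `τ (u ^ n) = 0` for `n ≠ 0` lies in the span of the nonzero powers of `u`, so by
multilinearity it suffices that `τ` vanishes on every product `u_{k₁} ^ n₁ ⋯ u_{kᵣ} ^ nᵣ` with
`r ≥ 1`, all `nⱼ ≠ 0` and `kⱼ ≠ kⱼ₊₁`. Spelled out in `a` and `b` this is a reduced word: each
`u_k ^ n` is the alternating word `(a ^ k b ^ (-k)) ^ n` or `(b ^ k a ^ (-k)) ^ |n|`, and where
two such blocks meet in the same letter the exponents combine to `kⱼ₊₁ - kⱼ ≠ 0`. Freeness of the
Haar unitaries `a` and `b` kills `τ` on nonempty reduced words; the case `r = 1` shows that each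
`u_k` is a Haar unitary.
-/

section ReducedWords

variable {ι G : Type*} [Group G]

def wordEval (x : ι → G) (w : List (ι × ℤ)) : G := (w.map fun p => x p.1 ^ p.2).prod

def IsReducedWord (w : List (ι × ℤ)) : Prop :=
  w.IsChain (fun p q => p.1 ≠ q.1) ∧ ∀ p ∈ w, p.2 ≠ 0

@[simp]
lemma wordEval_cons (x : ι → G) (p : ι × ℤ) (w : List (ι × ℤ)) :
    wordEval x (p :: w) = x p.1 ^ p.2 * wordEval x w := rfl

lemma isReducedWord_nil : IsReducedWord ([] : List (ι × ℤ)) := ⟨.nil, by simp⟩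

lemma isReducedWord_cons {p : ι × ℤ} {w : List (ι × ℤ)} :
    IsReducedWord (p :: w) ↔
      p.2 ≠ 0 ∧ (∀ q ∈ w.head?, p.1 ≠ q.1) ∧ IsReducedWord w := by
  simp only [IsReducedWord, List.isChain_cons, List.forall_mem_cons]
  tauto

variable [DecidableEq ι]

def consMerge (p : ι × ℤ) : List (ι × ℤ) → List (ι × ℤ)
  | [] => [p]
  | q :: w => if p.1 = q.1 then (p.1, p.2 + q.2) :: w else p :: q :: w

lemma wordEval_consMerge (x : ι → G) (p : ι × ℤ) (w : List (ι × ℤ)) :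
    wordEval x (consMerge p w) = x p.1 ^ p.2 * wordEval x w := by
  cases w with
  | nil => simp [consMerge]
  | cons q w =>
    rw [consMerge]
    split_ifs with h
    · simp [h, zpow_add, mul_assoc]
    · rfl

lemma head?_consMerge (p : ι × ℤ) (w : List (ι × ℤ)) :
    ∀ q ∈ (consMerge p w).head?, q.1 = p.1 := by
  cases w with
  | nil => simp [consMerge]
  | cons q w =>
    rw [consMerge]
    split_ifs <;> simp

lemma IsReducedWord.consMerge {p : ι × ℤ} {w : List (ι × ℤ)} (hw : IsReducedWord w)
    (hp : p.2 ≠ 0) (hmerge : ∀ q ∈ w.head?, p.1 = q.1 → p.2 + q.2 ≠ 0) :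
    IsReducedWord (consMerge p w) := by
  cases w with
  | nil => exact isReducedWord_cons.2 ⟨hp, by simp, isReducedWord_nil⟩
  | cons q w =>
    obtain ⟨hq, hqw, hw⟩ := isReducedWord_cons.1 hw
    rw [FreeProductPaper.consMerge]
    split_ifs with h
    · exact isReducedWord_cons.2 ⟨hmerge q rfl h, h ▸ hqw, hw⟩
    · exact isReducedWord_cons.2 ⟨hp, by simpa using h, isReducedWord_cons.2 ⟨hq, hqw, hw⟩⟩

def prependPow (i j : ι) (k : ℤ) : ℕ → List (ι × ℤ) → List (ι × ℤ)
  | 0, w => w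
  | m + 1, w => (i, k) :: consMerge (j, -k) (prependPow i j k m w)

lemma wordEval_prependPow (x : ι → G) (i j : ι) (k : ℤ) (m : ℕ) (w : List (ι × ℤ)) :
    wordEval x (prependPow i j k m w) = (x i ^ k * x j ^ (-k)) ^ m * wordEval x w := by
  induction m with
  | zero => simp [prependPow]
  | succ m ih => simp only [prependPow, wordEval_cons, wordEval_consMerge, ih, pow_succ', mul_assoc]

lemma isReducedWord_prependPow {i j : ι} (hij : i ≠ j) {k : ℤ} (hk : k ≠ 0) (m : ℕ)
    {w : List (ι × ℤ)} (hw : IsReducedWord w)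
    (hhead : ∀ q ∈ w.head?, q.1 = j → q.2 ≠ k) :
    IsReducedWord (prependPow i j k m w) := by
  induction m with
  | zero => exact hw
  | succ m ih =>
    refine isReducedWord_cons.2 ⟨hk, fun q hq => ?_, ih.consMerge (neg_ne_zero.2 hk) ?_⟩
    · rwa [head?_consMerge _ _ q hq]
    · intro q hq hjq
      cases m with
      | zero => have := hhead q hq hjq.symm; omega
      | succ m =>
        obtain rfl : (i, k) = q := by simpa [prependPow] using hq
        exact absurd hjq.symm hij

end ReducedWords

section Blocks

variable {G : Type*} [Group G]

-- `(k, n)` stands for `(a ^ k * b ^ (-k)) ^ n` with `a = x true`, `b = x false`, written for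
-- `n < 0` as `(b ^ k * a ^ (-k)) ^ |n|`.
def blocksWord : List (ℤ × ℤ) → List (Bool × ℤ)
  | [] => []
  | (k, n) :: ps => prependPow (decide (0 < n)) (!decide (0 < n)) k n.natAbs (blocksWord ps)

lemma wordEval_blocksWord (x : Bool → G) (ps : List (ℤ × ℤ)) :
    wordEval x (blocksWord ps) =
      (ps.map fun p => (x true ^ p.1 * x false ^ (-p.1)) ^ p.2).prod := by
  induction ps with
  | nil => rfl
  | cons p ps ih =>
    obtain ⟨k, n⟩ := p
    rw [blocksWord, wordEval_prependPow, ih, List.map_cons, List.prod_cons]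
    congr 1
    rcases lt_or_ge 0 n with hn | hn
    · simp [hn, ← zpow_natCast, Int.natAbs_of_nonneg hn.le]
    · simp only [not_lt.2 hn, decide_false, Bool.not_false, ← zpow_natCast,
        Int.ofNat_natAbs_of_nonpos hn, zpow_neg]
      rw [← inv_zpow, mul_inv_rev, inv_inv]

lemma blocksWord_cons {k n : ℤ} (hn : n ≠ 0) (ps : List (ℤ × ℤ)) :
    ∃ w, blocksWord ((k, n) :: ps) = (decide (0 < n), k) :: w := by
  obtain ⟨m, hm⟩ := Nat.exists_eq_succ_of_ne_zero (Int.natAbs_ne_zero.2 hn)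
  simp only [blocksWord, hm, prependPow]
  exact ⟨_, rfl⟩

lemma blocksWord_ne_nil {ps : List (ℤ × ℤ)} (hps : ∀ p ∈ ps, p.2 ≠ 0) (hne : ps ≠ []) :
    blocksWord ps ≠ [] := by
  obtain ⟨⟨k, n⟩, ps, rfl⟩ := List.exists_cons_of_ne_nil hne
  obtain ⟨w, hw⟩ := blocksWord_cons (k := k) (hps _ List.mem_cons_self) ps
  simp [hw]

lemma isReducedWord_blocksWord {ps : List (ℤ × ℤ)}
    (hchain : ps.IsChain (fun p q => p.1 ≠ q.1)) (hps : ∀ p ∈ ps, p.1 ≠ 0 ∧ p.2 ≠ 0) : IsReducedWord (blocksWord ps) := by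
  induction ps with
  | nil => exact isReducedWord_nil
  | cons p ps ih =>
    obtain ⟨k, n⟩ := p
    obtain ⟨hk, -⟩ := hps _ List.mem_cons_self
    refine isReducedWord_prependPow (by simp) hk _
      (ih hchain.tail fun p hp => hps p (List.mem_cons_of_mem _ hp)) fun q hq _ => ?_
    cases ps with
    | nil => simp [blocksWord] at hq
    | cons p' ps =>
      obtain ⟨w, hw⟩ := blocksWord_cons (k := p'.1) (hps p' (by simp)).2 ps
      obtain rfl : (decide (0 < p'.2), p'.1) = q := by simpa [hw] using hq
      exact (List.isChain_cons_cons.1 hchain).1.symm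

end Blocks

section Unitary

variable {R A : Type*}

lemma coe_zpow_neg_natCast [Monoid A] [StarMul A] (u : unitary A) (n : ℕ) :
    ((u ^ (-(n : ℤ)) : unitary A) : A) = star (u : A) ^ n := by
  rw [zpow_neg, zpow_natCast, ← Unitary.star_eq_inv, Unitary.coe_star, SubmonoidClass.coe_pow,
    star_pow]

lemma coe_zpow_natCast_mul_zpow_neg_natCast [Monoid A] [StarMul A] (u v : unitary A) (k : ℕ) :
    ((u ^ (k : ℤ) * v ^ (-(k : ℤ)) : unitary A) : A) = (u : A) ^ k * star (v : A) ^ k := by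
  rw [Submonoid.coe_mul, coe_zpow_neg_natCast, zpow_natCast, SubmonoidClass.coe_pow]

section Adjoin

variable [CommSemiring R] [StarRing R] [Semiring A] [StarRing A] [Algebra R A] [StarModule R A]

lemma coe_zpow_mem_adjoin (u : unitary A) (n : ℤ) :
    ((u ^ n : unitary A) : A) ∈ StarAlgebra.adjoin R {(u : A)} := by
  have hu : (u : A) ∈ StarAlgebra.adjoin R {(u : A)} := StarAlgebra.self_mem_adjoin_singleton R _
  obtain ⟨m, rfl | rfl⟩ := Int.eq_nat_or_neg n
  · simpa using pow_mem hu m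
  · rw [coe_zpow_neg_natCast]
    exact pow_mem (star_mem hu) m

lemma adjoin_le_span_zpowers (u : unitary A) :
    Subalgebra.toSubmodule (StarAlgebra.adjoin R {(u : A)}).toSubalgebra ≤
      Submodule.span R ((↑) '' (Subgroup.zpowers u : Set (unitary A))) := by
  rw [StarAlgebra.adjoin_eq_span, Set.star_singleton]
  refine Submodule.span_mono ?_
  have : Submonoid.closure ({(u : A)} ∪ {star (u : A)}) ≤
      (Subgroup.zpowers u).toSubmonoid.map (unitary A).subtype := by
    rw [Submonoid.closure_le]
    rintro _ (rfl | rfl)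
    · exact ⟨u, Subgroup.mem_zpowers u, rfl⟩
    · refine ⟨u⁻¹, (Subgroup.zpowers u).inv_mem (Subgroup.mem_zpowers u), ?_⟩
      simp [← Unitary.star_eq_inv]
  exact this

end Adjoin

lemma mem_span_zpow_of_apply_eq_zero [CommRing R] [StarRing R] [Ring A] [StarRing A] [Algebra R A]
    [StarModule R A] (τ : A →ₗ[R] R) (hτ1 : τ 1 = 1) (u : unitary A)
    (hu : ∀ n : ℤ, n ≠ 0 → τ (u ^ n : unitary A) = 0) {a : A}
    (ha : a ∈ StarAlgebra.adjoin R {(u : A)}) (hτa : τ a = 0) :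
    a ∈ Submodule.span R {b | ∃ n : ℤ, n ≠ 0 ∧ ((u ^ n : unitary A) : A) = b} := by
  -- `a ↦ a - τ a • 1` is linear, kills `1` and fixes the nonzero powers of `u`
  let P : A →ₗ[R] A := LinearMap.id - τ.smulRight (1 : A)
  have hP : Submodule.span R ((↑) '' (Subgroup.zpowers u : Set (unitary A))) ≤
      (Submodule.span R {b | ∃ n : ℤ, n ≠ 0 ∧ ((u ^ n : unitary A) : A) = b}).comap P := by
    rw [Submodule.span_le]
    rintro _ ⟨v, hv, rfl⟩
    obtain ⟨n, rfl⟩ := Subgroup.mem_zpowers_iff.1 hv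
    by_cases hn : n = 0
    · simp [P, hn, hτ1]
    · simpa [P, hu n hn] using
        Submodule.subset_span (R := R) (s := {b | ∃ n : ℤ, n ≠ 0 ∧ ((u ^ n : unitary A) : A) = b})
          ⟨n, hn, rfl⟩
  simpa [P, hτa] using hP (adjoin_le_span_zpowers u ha)

end Unitary

lemma map_ofFn_prod_eq_zero_of_mem_span {R A M : Type*} [CommSemiring R] [Semiring A]
    [Algebra R A] [AddCommMonoid M] [Module R M] {n : ℕ} (T : A →ₗ[R] M) (S : Fin n → Set A)
    (hT : ∀ s : Fin n → A, (∀ j, s j ∈ S j) → T (List.ofFn s).prod = 0) {x : Fin n → A}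
    (hx : ∀ j, x j ∈ Submodule.span R (S j)) : T (List.ofFn x).prod = 0 := by
  induction n generalizing T with
  | zero => exact hT x fun j => j.elim0
  | succ n ih =>
    rw [List.ofFn_succ, List.prod_cons]
    refine ih (T ∘ₗ LinearMap.mulLeft R (x 0)) (fun j => S j.succ) (fun s hs => ?_)
      fun j => hx j.succ
    have hker : S 0 ⊆ LinearMap.ker (T ∘ₗ LinearMap.mulRight R (List.ofFn s).prod) := by
      intro y hy
      simpa [List.ofFn_succ] using hT (Fin.cons y s) (Fin.cases hy hs)
    simpa using Submodule.span_le.2 hker (hx 0)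

section FreeHaarUnitaries

local notation "BH" => H →L[ℂ] H

lemma isHaarUnitary_coe_iff (τ : BH → ℂ) (u : unitary BH) :
    IsHaarUnitary τ u ↔ ∀ n : ℤ, n ≠ 0 → τ ((u ^ n : unitary BH) : BH) = 0 := by
  simp only [IsHaarUnitary, SetLike.coe_mem, true_and]
  constructor
  · intro h n hn
    obtain ⟨m, rfl | rfl⟩ := Int.eq_nat_or_neg n
    · rw [zpow_natCast, SubmonoidClass.coe_pow]
      exact (h m (by omega)).1
    · rw [coe_zpow_neg_natCast]
      exact (h m (by omega)).2
  · intro h n hn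
    have hpos := h n (by omega)
    have hneg := h (-n) (by omega)
    rw [zpow_natCast, SubmonoidClass.coe_pow] at hpos
    rw [coe_zpow_neg_natCast] at hneg
    exact ⟨hpos, hneg⟩

lemma apply_wordEval_eq_zero {ι : Type*} (τ : BH → ℂ) (x : ι → unitary BH)
    (hx : ∀ i, IsHaarUnitary τ (x i))
    (hfree : IsFreeFamily τ fun i => (StarAlgebra.adjoin ℂ {((x i : unitary BH) : BH)} : Set BH))
    {w : List (ι × ℤ)} (hw : IsReducedWord w) (hne : w ≠ []) :
    τ ((wordEval x w : unitary BH) : BH) = 0 := by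
  have key := hfree w.length (List.length_pos_iff.2 hne)
    (fun j : Fin w.length => ((x w[(j : ℕ)].1 ^ w[(j : ℕ)].2 : unitary BH) : BH))
    (fun j => w[(j : ℕ)].1)
    (fun j => coe_zpow_mem_adjoin _ _)
    (fun j => (isHaarUnitary_coe_iff τ _).1 (hx _) _ (hw.2 _ (List.getElem_mem _)))
    (fun j hj => List.isChain_iff_getElem.1 hw.1 j hj)
  rw [List.ofFn_getElem_eq_map w fun p => ((x p.1 ^ p.2 : unitary BH) : BH)] at key
  rwa [wordEval, SubmonoidClass.coe_list_prod, List.map_map]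

lemma apply_prod_blocks_eq_zero (τ : BH → ℂ) (x : Bool → unitary BH)
    (hx : ∀ i, IsHaarUnitary τ (x i))
    (hfree : IsFreeFamily τ fun i => (StarAlgebra.adjoin ℂ {((x i : unitary BH) : BH)} : Set BH))
    {ps : List (ℤ × ℤ)} (hchain : ps.IsChain fun p q => p.1 ≠ q.1)
    (hps : ∀ p ∈ ps, p.1 ≠ 0 ∧ p.2 ≠ 0) (hne : ps ≠ []) :
    τ (((ps.map fun p => (x true ^ p.1 * x false ^ (-p.1)) ^ p.2).prod : unitary BH) : BH) =
      0 := by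
  rw [← wordEval_blocksWord]
  exact apply_wordEval_eq_zero τ x hx hfree (isReducedWord_blocksWord hchain hps)
    (blocksWord_ne_nil (fun p hp => (hps p hp).2) hne)

lemma isHaarUnitary_zpow_mul_zpow_neg (τ : BH → ℂ) (x : Bool → unitary BH)
    (hx : ∀ i, IsHaarUnitary τ (x i))
    (hfree : IsFreeFamily τ fun i => (StarAlgebra.adjoin ℂ {((x i : unitary BH) : BH)} : Set BH))
    {k : ℤ} (hk : k ≠ 0) :
    IsHaarUnitary τ ((x true ^ k * x false ^ (-k) : unitary BH) : BH) :=
  (isHaarUnitary_coe_iff τ _).2 fun n hn => by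
    simpa using apply_prod_blocks_eq_zero τ x hx hfree (ps := [(k, n)]) (by simp)
      (by simp [hk, hn]) (by simp)

lemma isFreeFamily_adjoin_zpow_mul_zpow_neg (τ : BH →ₗ[ℂ] ℂ) (hτ1 : τ 1 = 1)
    (x : Bool → unitary BH) (hx : ∀ i, IsHaarUnitary τ (x i))
    (hfree : IsFreeFamily τ fun i => (StarAlgebra.adjoin ℂ {((x i : unitary BH) : BH)} : Set BH))
    {κ : Type*} (k : κ → ℤ) (hk_inj : Function.Injective k) (hk : ∀ i, k i ≠ 0) :
    IsFreeFamily τ fun i =>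
      (StarAlgebra.adjoin ℂ {((x true ^ k i * x false ^ (-k i) : unitary BH) : BH)} :
        Set BH) := by
  intro n hn y g hy hτy halt
  have hspan := fun j => mem_span_zpow_of_apply_eq_zero τ hτ1 _
    ((isHaarUnitary_coe_iff τ _).1 (isHaarUnitary_zpow_mul_zpow_neg τ x hx hfree (hk (g j))))
    (hy j) (hτy j)
  refine map_ofFn_prod_eq_zero_of_mem_span τ _ (fun s hs => ?_) hspan
  choose m hm hs using hs
  have hprod : (List.ofFn s).prod = (((List.ofFn fun j => (k (g j), m j)).map
      fun p => (x true ^ p.1 * x false ^ (-p.1)) ^ p.2).prod : unitary BH) := by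
    simp only [SubmonoidClass.coe_list_prod, List.map_ofFn]
    exact congrArg List.prod (List.ofFn_inj.2 (funext fun j => (hs j).symm))
  rw [hprod]
  refine apply_prod_blocks_eq_zero τ x hx hfree ?_ ?_ (by simpa using hn.ne')
  · exact List.isChain_ofFn.2 fun j hj => hk_inj.ne (halt j hj)
  · simpa [List.mem_ofFn] using fun j => ⟨hk (g j), hm j⟩

end FreeHaarUnitaries

theorem isFreeFamily_pow_mul_pow_inv_of_free_haarUnitaries_general
    {H : Type*} [NormedAddCommGroup H] [InnerProductSpace ℂ H] [CompleteSpace H]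
    (M : VonNeumannAlgebra H) (ξ : H)
    -- `τ` is a faithful normal tracial state on `M`
    (hξ : IsTraceVector M ξ)
    (τ : (H →L[ℂ] H) → ℂ) (hτ : τ = fun z => ⟪ξ, z ξ⟫)
    (a b : H →L[ℂ] H)
    -- `a` and `b` are free Haar unitaries
    (ha : IsHaarUnitary τ a) (hb : IsHaarUnitary τ b)
    (hfree : IsFreeFamily τ (fun i : Bool =>
      if i then ((StarAlgebra.adjoin ℂ {a} : StarSubalgebra ℂ (H →L[ℂ] H)) : Set (H →L[ℂ] H))
      else ((StarAlgebra.adjoin ℂ {b} : StarSubalgebra ℂ (H →L[ℂ] H)) : Set (H →L[ℂ] H)))) :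
    (∀ k : ℕ, 0 < k → IsHaarUnitary τ (a ^ k * (star b) ^ k)) ∧
      IsFreeFamily τ (fun k : {k : ℕ // 0 < k} =>
        ((StarAlgebra.adjoin ℂ {a ^ (k : ℕ) * (star b) ^ (k : ℕ)} :
          StarSubalgebra ℂ (H →L[ℂ] H)) : Set (H →L[ℂ] H))) := by
  obtain ⟨τ, rfl⟩ : ∃ τL : (H →L[ℂ] H) →ₗ[ℂ] ℂ, ⇑τL = τ :=
    ⟨(innerSL ℂ ξ).comp (ContinuousLinearMap.apply ℂ H ξ) |>.toLinearMap, hτ ▸ rfl⟩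
  have hτ1 : τ 1 = 1 := by simp [hτ, hξ.norm_one]
  lift a to unitary (H →L[ℂ] H) using ha.1
  lift b to unitary (H →L[ℂ] H) using hb.1
  set x : Bool → unitary (H →L[ℂ] H) := fun i => if i then a else b
  have hx : ∀ i, IsHaarUnitary τ (x i) := by
    rintro (_ | _)
    exacts [hb, ha]
  have hfree' : IsFreeFamily τ fun i =>
      ((StarAlgebra.adjoin ℂ {((x i : unitary (H →L[ℂ] H)) : H →L[ℂ] H)} :
        StarSubalgebra ℂ (H →L[ℂ] H)) : Set (H →L[ℂ] H)) := by
    convert hfree using 3 with i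
    cases i <;> rfl
  simp only [← coe_zpow_natCast_mul_zpow_neg_natCast]
  exact ⟨fun k hk => isHaarUnitary_zpow_mul_zpow_neg τ x hx hfree' (by omega),
    isFreeFamily_adjoin_zpow_mul_zpow_neg τ hτ1 x hx hfree'
      (fun k : {k : ℕ // 0 < k} => (k : ℤ)) (fun _ _ h => Subtype.ext (Int.ofNat_inj.1 h))
      fun k => by have := k.2; omega⟩

/-- If `a, b` are free Haar unitaries in a tracial von Neumann algebra `(M, τ)` (with a
faithful normal tracial state, realized as the vector state of a trace vector `ξ`), then
`{ a^k b^{-k} : k ≥ 1 }` is a free family of Haar unitaries (freeness of a family of elements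
meaning freeness of the family of unital *-algebras they generate).  Note `b⁻¹ = star b`. -/
theorem isFreeFamily_pow_mul_pow_inv_of_free_haarUnitaries
    {H : Type*} [NormedAddCommGroup H] [InnerProductSpace ℂ H] [CompleteSpace H]
    (M : VonNeumannAlgebra H) (ξ : H)
    -- `τ` is a faithful normal tracial state on `M`
    (hξ : IsTraceVector M ξ)
    (τ : (H →L[ℂ] H) → ℂ) (hτ : τ = fun z => ⟪ξ, z ξ⟫)
    (a b : H →L[ℂ] H) (haM : a ∈ M) (hbM : b ∈ M)
    -- `a` and `b` are free Haar unitaries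
    (ha : IsHaarUnitary τ a) (hb : IsHaarUnitary τ b)
    (hfree : IsFreeFamily τ (fun i : Bool =>
      if i then ((StarAlgebra.adjoin ℂ {a} : StarSubalgebra ℂ (H →L[ℂ] H)) : Set (H →L[ℂ] H))
      else ((StarAlgebra.adjoin ℂ {b} : StarSubalgebra ℂ (H →L[ℂ] H)) : Set (H →L[ℂ] H)))) :
    (∀ k : ℕ, 0 < k → IsHaarUnitary τ (a ^ k * (star b) ^ k)) ∧
      IsFreeFamily τ (fun k : {k : ℕ // 0 < k} =>
        ((StarAlgebra.adjoin ℂ {a ^ (k : ℕ) * (star b) ^ (k : ℕ)} :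
          StarSubalgebra ℂ (H →L[ℂ] H)) : Set (H →L[ℂ] H))) :=
  isFreeFamily_pow_mul_pow_inv_of_free_haarUnitaries_general M ξ hξ τ hτ a b ha hb hfree

end FreeProductPaper
end

section
/- Let M = M₁ * M₂ be a tracial free product of finite von Neumann algebras with trace τ, let u ∈ M₁ be a Haar unitary, and let x = v₁v₂⋯v_l where each v_j is a trace-zero unitary in M_{i(j)} with i(j) ≠ i(j+1), and x ∉ M₁ (i.e., either l ≥ 2, or l = 1 and i(1) = 2). Then the unitaries a := x*ux and b := u are free Haar unitaries in (M, τ); in particular the von Neumann algebra they generate is isomorphic to the free group factor L(F₂). -/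
open scoped ComplexInnerProductSpace

/-! Write `x = w y` with `w ∈ M₁` unitary (either `1` or the first letter of `x`) and `y` an
alternating word of centered unitaries whose first letter lies in `M₂`. Conjugation by `y`
preserves the trace; it turns `x* p x`, for `p` in the *-algebra of `u`, into `w* p w ∈ M₁`, and a
centered `b ∈ M₁` into `y b y*`, which (peeling the letters of `y` off from the left) is a reduced
word in `M₁, M₂` beginning and ending in `M₂`. So an alternating product of centered elements of
the *-algebras of `x* u x` and of `u` becomes, after conjugation, a reduced word of centered
elements of `M₁` and `M₂`, whose trace vanishes by freeness. -/

namespace FreeProductPaper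

/-- `AltWord P s e w`: `w = z₁ ⋯ zₙ` with `n ≥ 1`, `P iₖ zₖ`, `iₖ ≠ iₖ₊₁`, `i₁ = s`, `iₙ = e`. -/
inductive AltWord {ι A : Type*} [Mul A] (P : ι → A → Prop) : ι → ι → A → Prop
  | single {s : ι} {z : A} : P s z → AltWord P s s z
  | cons {s s' e : ι} {z w : A} : P s z → AltWord P s' e w → s ≠ s' → AltWord P s e (z * w)

namespace AltWord

variable {ι A : Type*} {P : ι → A → Prop} {s e s' e' : ι} {z w w' : A}

theorem mul [Semigroup A] (h : AltWord P s e w) (h' : AltWord P s' e' w') (hne : e ≠ s') :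
    AltWord P s e' (w * w') := by
  induction h with
  | single hz => exact cons hz h' hne
  | cons hz _ hne₁ ih => rw [mul_assoc]; exact cons hz (ih hne) hne₁

theorem snoc [Semigroup A] (h : AltWord P s e w) (hz : P e' z) (hne : e ≠ e') :
    AltWord P s e' (w * z) :=
  h.mul (single hz) hne

theorem mem {S : Type*} [Mul A] [SetLike S A] [MulMemClass S A] (K : S) (h : AltWord P s e w)
    (hP : ∀ i a, P i a → a ∈ K) : w ∈ K := by
  induction h with
  | single hz => exact hP _ _ hz
  | cons hz _ _ ih => exact mul_mem (hP _ _ hz) ih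

theorem prod_ofFn [Monoid A] {n : ℕ} {z : Fin (n + 1) → A} {g : Fin (n + 1) → ι}
    (hz : ∀ j, AltWord P (g j) (g j) (z j))
    (halt : ∀ (j : ℕ) (h : j + 1 < n + 1), g ⟨j, by omega⟩ ≠ g ⟨j + 1, h⟩) :
    AltWord P (g 0) (g (Fin.last n)) (List.ofFn z).prod := by
  induction n with
  | zero => simpa using hz 0
  | succ n ih =>
    have htail := ih (z := fun j => z j.succ) (g := fun j => g j.succ) (fun j => hz j.succ)
      (fun j h => halt (j + 1) (by omega))
    rw [List.ofFn_succ, List.prod_cons, ← Fin.succ_last]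
    exact (hz 0).mul htail (halt 0 (by omega))

theorem exists_ofFn [Monoid A] (h : AltWord P s e w) :
    ∃ (n : ℕ) (z : Fin (n + 1) → A) (g : Fin (n + 1) → ι), (∀ j, P (g j) (z j)) ∧ g 0 = s ∧
      (∀ (j : ℕ) (h : j + 1 < n + 1), g ⟨j, by omega⟩ ≠ g ⟨j + 1, h⟩) ∧
      (List.ofFn z).prod = w := by
  induction h with
  | @single s z hz => exact ⟨0, fun _ => z, fun _ => s, fun _ => hz, rfl, by omega, by simp⟩
  | @cons s s' e z w hz _ hne ih =>
    obtain ⟨n, z', g, hz', hg0, halt, rfl⟩ := ih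
    refine ⟨n + 1, Fin.cons z z', Fin.cons s g, Fin.cases hz hz', rfl, ?_, by simp [List.ofFn_succ]⟩
    rintro (_ | j) h
    · simpa [← hg0] using hne
    · exact halt j (by omega)

end AltWord

theorem exists_prod_ofFn_eq_mul_altWord {A : Type*} [Monoid A] {P : Bool → A → Prop}
    {l : ℕ} {v : Fin l → A} {i : Fin l → Bool} (hv : ∀ j, P (i j) (v j))
    (halt : ∀ (j : ℕ) (h : j + 1 < l), i ⟨j, by omega⟩ ≠ i ⟨j + 1, h⟩)
    (hx : 2 ≤ l ∨ (l = 1 ∧ ∀ j, i j = false)) :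
    ∃ (w y : A) (e : Bool), (w = 1 ∨ P true w) ∧ AltWord P false e y ∧
      (List.ofFn v).prod = w * y := by
  obtain ⟨n, rfl⟩ : ∃ n, l = n + 1 := ⟨l - 1, by omega⟩
  cases h0 : i 0
  · exact ⟨1, _, _, .inl rfl, h0 ▸ AltWord.prod_ofFn (fun j => .single (hv j)) halt,
      (one_mul _).symm⟩
  · obtain ⟨m, rfl⟩ : ∃ m, n = m + 1 := by
      rcases hx with h | ⟨-, h⟩
      · exact ⟨n - 1, by omega⟩
      · exact absurd (h 0) (by simp [h0])
    have h1 : i 1 = false := by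
      have h01 : i 0 ≠ i 1 := halt 0 (by omega)
      simpa [h0] using h01.symm
    have htail := AltWord.prod_ofFn (z := fun j => v j.succ) (g := fun j => i j.succ)
      (fun j => .single (hv j.succ)) (fun j h => halt (j + 1) (by omega))
    refine ⟨v 0, _, i (Fin.last (m + 1)), .inr (h0 ▸ hv 0), ?_,
      by rw [List.ofFn_succ, List.prod_cons]⟩
    simpa [h1] using htail

variable {H : Type*} [NormedAddCommGroup H] [InnerProductSpace ℂ H]

theorem IsFreeFamily.eq_zero_of_altWord {ι : Type*} {τ : (H →L[ℂ] H) → ℂ}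
    {S : ι → Set (H →L[ℂ] H)} (hfree : IsFreeFamily τ S) {s e : ι} {w : H →L[ℂ] H}
    (h : AltWord (fun i z => z ∈ S i ∧ τ z = 0) s e w) : τ w = 0 := by
  obtain ⟨n, z, g, hz, -, halt, rfl⟩ := h.exists_ofFn
  exact hfree (n + 1) n.succ_pos z g (fun j => (hz j).1) (fun j => (hz j).2) halt

variable [CompleteSpace H]

theorem inner_star_apply_self (ξ : H) (z : H →L[ℂ] H) : ⟪ξ, star z ξ⟫ = star ⟪ξ, z ξ⟫ := by
  rw [ContinuousLinearMap.star_eq_adjoint, ContinuousLinearMap.adjoint_inner_right,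
    ← inner_conj_symm]
  rfl

section Tracial

variable {M : StarSubalgebra ℂ (H →L[ℂ] H)} {τ : (H →L[ℂ] H) → ℂ}

theorem trace_mul_mul_star (htr : ∀ a ∈ M, ∀ b ∈ M, τ (a * b) = τ (b * a))
    {y c : H →L[ℂ] H} (hy : y ∈ M) (hyU : y ∈ unitary (H →L[ℂ] H)) (hc : c ∈ M) :
    τ (y * c * star y) = τ c := by
  rw [htr _ (mul_mem hy hc) _ (star_mem hy), ← mul_assoc, Unitary.star_mul_self_of_mem hyU,
    one_mul]

theorem trace_star_mul_mul (htr : ∀ a ∈ M, ∀ b ∈ M, τ (a * b) = τ (b * a))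
    {y c : H →L[ℂ] H} (hy : y ∈ M) (hyU : y ∈ unitary (H →L[ℂ] H)) (hc : c ∈ M) :
    τ (star y * c * y) = τ c := by
  simpa using trace_mul_mul_star htr (star_mem hy) (Unitary.star_mem hyU) hc

theorem IsHaarUnitary.star_mul_mul {u x : H →L[ℂ] H} (hu : IsHaarUnitary τ u)
    (htr : ∀ a ∈ M, ∀ b ∈ M, τ (a * b) = τ (b * a)) (huM : u ∈ M) (hx : x ∈ M)
    (hxU : x ∈ unitary (H →L[ℂ] H)) : IsHaarUnitary τ (star x * u * x) := by
  have hpow (c : H →L[ℂ] H) (n : ℕ) : (star x * c * x) ^ n = star x * c ^ n * x := by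
    simpa using (map_pow (Unitary.conjStarAlgAut ℂ _ (star ⟨x, hxU⟩)) c n).symm
  refine ⟨mul_mem (mul_mem (Unitary.star_mem hxU) hu.1) hxU, fun n hn => ⟨?_, ?_⟩⟩
  · rw [hpow, trace_star_mul_mul htr hx hxU (pow_mem huM n)]
    exact (hu.2 n hn).1
  · rw [show star (star x * u * x) = star x * star u * x by simp [mul_assoc], hpow,
      trace_star_mul_mul htr hx hxU (pow_mem (star_mem huM) n)]
    exact (hu.2 n hn).2

theorem AltWord.mul_mul_star {ι : Type*} {N : ι → StarSubalgebra ℂ (H →L[ℂ] H)}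
    (hNM : ∀ i, N i ≤ M) (htr : ∀ a ∈ M, ∀ b ∈ M, τ (a * b) = τ (b * a))
    (hstar : ∀ z, τ (star z) = star (τ z)) {s e t : ι} {y b : H →L[ℂ] H}
    (hy : AltWord (fun i v => v ∈ N i ∧ v ∈ unitary (H →L[ℂ] H) ∧ τ v = 0) s e y)
    (hb : b ∈ N t) (hbτ : τ b = 0) :
    AltWord (fun i z => z ∈ N i ∧ τ z = 0) s s (y * b * star y) := by
  induction hy with
  | @single s v hv =>
    obtain ⟨hvN, hvU, hvτ⟩ := hv
    have hv' : star v ∈ N s ∧ τ (star v) = 0 := ⟨star_mem hvN, by rw [hstar, hvτ, star_zero]⟩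
    by_cases hst : s = t
    · subst hst
      exact .single ⟨mul_mem (mul_mem hvN hb) hv'.1,
        by rw [trace_mul_mul_star htr (hNM s hvN) hvU (hNM s hb), hbτ]⟩
    · exact ((AltWord.single ⟨hvN, hvτ⟩).snoc ⟨hb, hbτ⟩ hst).snoc hv' (Ne.symm hst)
  | @cons s s' e v w hv _ hne ih =>
    obtain ⟨hvN, -, hvτ⟩ := hv
    have hv' : star v ∈ N s ∧ τ (star v) = 0 := ⟨star_mem hvN, by rw [hstar, hvτ, star_zero]⟩
    have hword := (AltWord.cons ⟨hvN, hvτ⟩ ih hne).snoc hv' hne.symm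
    simpa only [star_mul, mul_assoc] using hword

theorem isFreeFamily_of_altWord_mul_mul_star {ι : Type*} {S : ι → Set (H →L[ℂ] H)}
    (hfree : IsFreeFamily τ S) (htr : ∀ a ∈ M, ∀ b ∈ M, τ (a * b) = τ (b * a))
    {y : H →L[ℂ] H} (hyM : y ∈ M) (hyU : y ∈ unitary (H →L[ℂ] H))
    {T : ι → Set (H →L[ℂ] H)} (hTM : ∀ i, T i ⊆ M)
    (hT : ∀ i, ∀ z ∈ T i, τ z = 0 →
      AltWord (fun i z => z ∈ S i ∧ τ z = 0) i i (y * z * star y)) :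
    IsFreeFamily τ T := by
  intro n hn z g hz hzτ halt
  obtain ⟨n, rfl⟩ : ∃ m, n = m + 1 := ⟨n - 1, by omega⟩
  have hprodM : (List.ofFn z).prod ∈ M :=
    list_prod_mem (List.forall_mem_ofFn_iff.2 fun j => hTM _ (hz j))
  have hconj : y * (List.ofFn z).prod * star y = (List.ofFn fun j => y * z j * star y).prod := by
    rw [← Unitary.conjStarAlgAut_apply (S := ℂ) ⟨y, hyU⟩, map_list_prod, List.map_ofFn]
    rfl
  rw [← trace_mul_mul_star htr hyM hyU hprodM, hconj]
  exact hfree.eq_zero_of_altWord (AltWord.prod_ofFn (fun j => hT _ _ (hz j) (hzτ j)) halt)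

theorem isFreeFamily_adjoin_star_mul_mul {N : Bool → StarSubalgebra ℂ (H →L[ℂ] H)}
    (hNM : ∀ b, N b ≤ M) (hfree : IsFreeFamily τ fun b => (N b : Set (H →L[ℂ] H)))
    (htr : ∀ a ∈ M, ∀ b ∈ M, τ (a * b) = τ (b * a)) (hstar : ∀ z, τ (star z) = star (τ z))
    {u w y : H →L[ℂ] H} {e : Bool} (hu : u ∈ N true) (hw : w ∈ N true)
    (hy : AltWord (fun i v => v ∈ N i ∧ v ∈ unitary (H →L[ℂ] H) ∧ τ v = 0) false e y) :
    IsFreeFamily τ fun c : Bool => if c then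
        ((StarAlgebra.adjoin ℂ {star (w * y) * u * (w * y)} : StarSubalgebra ℂ (H →L[ℂ] H)) :
          Set (H →L[ℂ] H))
      else ((StarAlgebra.adjoin ℂ {u} : StarSubalgebra ℂ (H →L[ℂ] H)) : Set (H →L[ℂ] H)) := by
  have hyM : y ∈ M := hy.mem M fun i _ hv => hNM i hv.1
  have hyU : y ∈ unitary (H →L[ℂ] H) := hy.mem (unitary _) fun _ _ hv => hv.2.1
  have hadj_u : StarAlgebra.adjoin ℂ {u} ≤ N true :=
    StarAlgebra.adjoin_le (Set.singleton_subset_iff.2 hu)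
  have hwyM : w * y ∈ M := mul_mem (hNM true hw) hyM
  have hadj_M : StarAlgebra.adjoin ℂ {star (w * y) * u * (w * y)} ≤ M :=
    StarAlgebra.adjoin_le <| Set.singleton_subset_iff.2 <|
      mul_mem (mul_mem (star_mem hwyM) (hNM true hu)) hwyM
  have hadj_conj : StarAlgebra.adjoin ℂ {star (w * y) * u * (w * y)} ≤
      (N true).comap (Unitary.conjStarAlgAut ℂ _ ⟨y, hyU⟩).toStarAlgHom := by
    refine StarAlgebra.adjoin_le (Set.singleton_subset_iff.2 ?_)
    have hyy : y * star y = 1 := Unitary.mul_star_self_of_mem hyU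
    have hconj : y * (star (w * y) * u * (w * y)) * star y = star w * u * w := by
      simp only [star_mul, mul_assoc, hyy, mul_one]
      rw [← mul_assoc, hyy, one_mul]
    change y * (star (w * y) * u * (w * y)) * star y ∈ N true
    rw [hconj]
    exact mul_mem (mul_mem (star_mem hw) hu) hw
  refine isFreeFamily_of_altWord_mul_mul_star hfree htr hyM hyU (fun c => ?_) (fun c => ?_)
  · cases c
    · exact fun z hz => hNM true (hadj_u hz)
    · exact fun z hz => hadj_M hz
  · cases c
    · exact fun z hz hzτ => hy.mul_mul_star hNM htr hstar (hadj_u hz) hzτ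
    · exact fun z hz hzτ =>
        .single ⟨hadj_conj hz, by rwa [trace_mul_mul_star htr hyM hyU (hadj_M hz)]⟩

end Tracial

/-- Let `M = M₁ * M₂` be a tracial free product (here `Bool` indexes the factors, `true ↦ M₁`,
`false ↦ M₂`), `u ∈ M₁` a Haar unitary, and `x = v 0 * ⋯ * v (l-1)` an alternating word of
trace-zero unitaries with `x ∉ M₁` (i.e. `l ≥ 2`, or `l = 1` with the single letter in `M₂`).
Then `a := x* u x` and `b := u` are free Haar unitaries: each is a Haar unitary and the
*-algebras they generate are free with respect to `τ`; equivalently (and in particular) the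
von Neumann algebra they generate is a copy of the free group factor `L(F₂)`. -/
theorem conjugated_haarUnitary_free_in_free_product
    {H : Type*} [NormedAddCommGroup H] [InnerProductSpace ℂ H] [CompleteSpace H]
    (M M₁ M₂ : VonNeumannAlgebra H) (ξ : H)
    -- `τ := fun z => ⟪ξ, z ξ⟫` is a faithful normal tracial state on `M`
    (hξ : IsTraceVector M ξ)
    (τ : (H →L[ℂ] H) → ℂ) (hτ : τ = fun z => ⟪ξ, z ξ⟫)
    -- `M₁` and `M₂` are von Neumann subalgebras of `M`, generating `M` and free w.r.t. `τ`
    (hM₁ : M₁ ≤ M) (hM₂ : M₂ ≤ M)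
    (hfree : IsFreeFamily τ
      (fun b : Bool => if b then (M₁ : Set (H →L[ℂ] H)) else (M₂ : Set (H →L[ℂ] H))))
    -- `u ∈ M₁` is a Haar unitary
    (u : H →L[ℂ] H) (huM : u ∈ M₁) (hu : IsHaarUnitary τ u)
    -- `x = v 0 * ⋯ * v (l-1)` is an alternating word of trace-zero unitaries,
    -- with letter `v j` in the factor indexed by `i j`
    (l : ℕ) (v : Fin l → (H →L[ℂ] H)) (i : Fin l → Bool)
    (hv : ∀ j, v j ∈ (if i j then (M₁ : Set (H →L[ℂ] H)) else (M₂ : Set (H →L[ℂ] H))))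
    (hvU : ∀ j, v j ∈ unitary (H →L[ℂ] H))
    (hvτ : ∀ j, τ (v j) = 0)
    (halt : ∀ (j : ℕ) (h : j + 1 < l), i ⟨j, by omega⟩ ≠ i ⟨j + 1, h⟩)
    -- `x ∉ M₁`: either `l ≥ 2`, or `l = 1` and the single letter lies in `M₂`
    (hx : 2 ≤ l ∨ (l = 1 ∧ ∀ j, i j = false))
    (x : H →L[ℂ] H) (hxdef : x = (List.ofFn v).prod) :
    -- `a := x* u x` and `b := u` are free Haar unitaries
    IsHaarUnitary τ (star x * u * x) ∧ IsHaarUnitary τ u ∧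
      IsFreeFamily τ (fun c : Bool =>
        if c then ((StarAlgebra.adjoin ℂ {star x * u * x} :
            StarSubalgebra ℂ (H →L[ℂ] H)) : Set (H →L[ℂ] H))
        else ((StarAlgebra.adjoin ℂ {u} :
            StarSubalgebra ℂ (H →L[ℂ] H)) : Set (H →L[ℂ] H))) := by
  have htr : ∀ a ∈ M.toStarSubalgebra, ∀ b ∈ M.toStarSubalgebra, τ (a * b) = τ (b * a) := by
    subst hτ; exact hξ.tracial
  have hstar : ∀ z, τ (star z) = star (τ z) := by
    subst hτ; exact inner_star_apply_self ξ
  let N (b : Bool) : StarSubalgebra ℂ (H →L[ℂ] H) :=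
    if b then M₁.toStarSubalgebra else M₂.toStarSubalgebra
  have hN (b : Bool) : (N b : Set (H →L[ℂ] H)) = if b then (M₁ : Set _) else M₂ := by
    cases b <;> rfl
  have hNM (b : Bool) : N b ≤ M.toStarSubalgebra := by
    cases b
    exacts [hM₂, hM₁]
  obtain ⟨w, y, e, hw, hy, hxwy⟩ := exists_prod_ofFn_eq_mul_altWord
    (P := fun b v => v ∈ N b ∧ v ∈ unitary (H →L[ℂ] H) ∧ τ v = 0)
    (fun j => ⟨by rw [← SetLike.mem_coe, hN]; exact hv j, hvU j, hvτ j⟩) halt hx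
  obtain ⟨hwN, hwU⟩ : w ∈ N true ∧ w ∈ unitary (H →L[ℂ] H) := by
    rcases hw with rfl | ⟨hwN, hwU, -⟩
    exacts [⟨one_mem _, one_mem _⟩, ⟨hwN, hwU⟩]
  have hyM : y ∈ M := hy.mem M.toStarSubalgebra fun b _ hv => hNM b hv.1
  have hyU : y ∈ unitary (H →L[ℂ] H) := hy.mem (unitary _) fun _ _ hv => hv.2.1
  subst hxdef
  rw [hxwy]
  exact ⟨hu.star_mul_mul htr (hM₁ huM) (mul_mem (hM₁ hwN) hyM) (mul_mem hwU hyU), hu,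
    isFreeFamily_adjoin_star_mul_mul hNM (funext hN ▸ hfree) htr hstar huM hwN hy⟩

end FreeProductPaper
end
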